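/- For every 1 ≤ p ≤ n, the element 𝔊⁽ⁿ⁾(b_p, a_2, …, a_n ; b_1, …, b_n) ∈ H_n ⊗ R (i.e. 𝔊⁽ⁿ⁾(a;b) with the substitution a_1 = b_p) factors as A_{p−1}^1(b_p; 1) · (1 × 𝔊⁽ⁿ⁻¹⁾(a_2,…,a_n ; b_1,…,b_{p−1},b_{p+1},…,b_n)), where 1× : H_{n−1} ⊗ R → H_n ⊗ R is the R-algebra homomorphism sending s_i to s_{i+1} for all i, and 𝔊⁽ⁿ⁻¹⁾ is formed with respect to the listed n−1 variables (b_p omitted). -/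

import Mathlib

set_option maxHeartbeats 1000000
set_option synthInstance.maxHeartbeats 400000

open MvPolynomial

/-- The simple transposition `s_{i+1}` (1-based) of `Fin n`, for `i : Fin (n-1)` (0-based). -/
def sPerm {n : ℕ} (i : Fin (n - 1)) : Equiv.Perm (Fin n) :=
  Equiv.swap ⟨i.val, by have := i.isLt; omega⟩ ⟨i.val + 1, by have := i.isLt; omega⟩

/-- The simple transposition `s_i` of `Fin n` for a 1-based index `i : ℕ`;
junk value `1` out of range. -/
def sPermN {n : ℕ} (i : ℕ) : Equiv.Perm (Fin n) :=
  if h : 1 ≤ i ∧ i ≤ n - 1 then sPerm ⟨i - 1, by omega⟩ else 1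

/-- The product of the simple transpositions corresponding to a word. -/
def wordProd {n : ℕ} (l : List (Fin (n - 1))) : Equiv.Perm (Fin n) :=
  (l.map sPerm).prod

/-- The Coxeter length of a permutation: the minimal length of a word in the
simple transpositions expressing it. -/
noncomputable def len {n : ℕ} (w : Equiv.Perm (Fin n)) : ℕ :=
  sInf {k | ∃ l : List (Fin (n - 1)), wordProd l = w ∧ l.length = k}

/-- `l` is a reduced word for `w`. -/
def IsReducedWord {n : ℕ} (l : List (Fin (n - 1))) (w : Equiv.Perm (Fin n)) : Prop :=
  wordProd l = w ∧ l.length = len w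

/-- The longest permutation `w₀` of `S_n`, sending `i ↦ n+1-i` (1-based). -/
def w0 (n : ℕ) : Equiv.Perm (Fin n) := Fin.revPerm

/-- The Bruhat order: `w ≤ v` iff some reduced word for `v` contains a subword
that is a reduced word for `w`. -/
noncomputable def bruhatLE {n : ℕ} (w v : Equiv.Perm (Fin n)) : Prop :=
  ∃ l l' : List (Fin (n - 1)), IsReducedWord l v ∧ l'.Sublist l ∧ IsReducedWord l' w

/-- The lower of the two points moved by `s_{i+1}`. -/
def fLo {n : ℕ} (i : Fin (n - 1)) : Fin n := ⟨i.val, by have := i.isLt; omega⟩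

/-- The upper of the two points moved by `s_{i+1}`. -/
def fHi {n : ℕ} (i : Fin (n - 1)) : Fin n := ⟨i.val + 1, by have := i.isLt; omega⟩

/-- The multiplicative set of monomials in a multivariate polynomial ring over `ℤ`. -/
noncomputable def varMon (σ : Type) : Submonoid (MvPolynomial σ ℤ) :=
  Submonoid.closure (Set.range MvPolynomial.X)

/-- The ring of Laurent polynomials over `ℤ` in variables indexed by `σ`,
realized as the localization of `MvPolynomial σ ℤ` at the monomials. -/
abbrev LaurentMv (σ : Type) := Localization (varMon σ)

/-- The variable `X s` as a Laurent polynomial. -/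
noncomputable def Xu {σ : Type} (s : σ) : LaurentMv σ :=
  algebraMap (MvPolynomial σ ℤ) (LaurentMv σ) (MvPolynomial.X s)

/-- The inverse `(X s)⁻¹` of a variable, as a Laurent polynomial. -/
noncomputable def XuInv {σ : Type} (s : σ) : LaurentMv σ :=
  Localization.mk 1 ⟨MvPolynomial.X s, Submonoid.subset_closure ⟨s, rfl⟩⟩

theorem isUnit_Xu {σ : Type} (s : σ) : IsUnit (Xu s) :=
  IsLocalization.map_units (M := varMon σ) (LaurentMv σ)
    ⟨MvPolynomial.X s, Submonoid.subset_closure ⟨s, rfl⟩⟩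

/-- Substitution of units for the variables, as a ring homomorphism on
Laurent polynomial rings. -/
noncomputable def substLaurent {σ τ : Type} (f : σ → LaurentMv τ)
    (hf : ∀ s, IsUnit (f s)) : LaurentMv σ →+* LaurentMv τ :=
  IsLocalization.lift (M := varMon σ) (g := (MvPolynomial.aeval f).toRingHom)
    (by
      rintro ⟨y, hy⟩
      induction hy using Submonoid.closure_induction with
      | mem x hx =>
          obtain ⟨s, rfl⟩ := hx
          simpa using hf s
      | one => simp
      | mul x y _ _ hx hy => simpa [map_mul] using hx.mul hy)

/-- The abbreviation `R n` for the coefficient ring `ℤ[a_i^{±1}, b_i^{±1}]`: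
`a`-variables indexed by `Sum.inl`, `b`-variables by `Sum.inr`. -/
abbrev Rng (n : ℕ) := LaurentMv (Fin n ⊕ Fin n)

/-- The defining relations of the degenerate Hecke algebra with `m` generators
over the Laurent polynomial ring `R n`; generator `i : Fin m` stands for
`s_{i+1}` (1-based). -/
inductive HRelR (n m : ℕ) :
    FreeAlgebra (Rng n) (Fin m) → FreeAlgebra (Rng n) (Fin m) → Prop
  | comm (i j : Fin m) (h : (i : ℕ) + 2 ≤ j ∨ (j : ℕ) + 2 ≤ i) :
      HRelR n m (FreeAlgebra.ι _ i * FreeAlgebra.ι _ j)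
        (FreeAlgebra.ι _ j * FreeAlgebra.ι _ i)
  | braid (i j : Fin m) (h : (j : ℕ) = i + 1) :
      HRelR n m (FreeAlgebra.ι _ i * FreeAlgebra.ι _ j * FreeAlgebra.ι _ i)
        (FreeAlgebra.ι _ j * FreeAlgebra.ι _ i * FreeAlgebra.ι _ j)
  | sq (i : Fin m) :
      HRelR n m (FreeAlgebra.ι _ i * FreeAlgebra.ι _ i) (-(FreeAlgebra.ι _ i))

/-- The degenerate Hecke algebra `H_{m+1} ⊗ R n`, presented as the quotient of
the free `R n`-algebra on `m` generators by the Hecke relations.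
`H_n ⊗ R` itself is `HA n (n-1)`. -/
abbrev HA (n m : ℕ) := RingQuot (HRelR n m)

noncomputable instance instHARing (n m : ℕ) : Ring (HA n m) := by
  with_unfolding_all exact RingQuot.instRing (R := FreeAlgebra (Rng n) (Fin m)) (HRelR n m)

/-- The generator `s_i` of `HA n m` for a 1-based index `i : ℕ`; junk value `0`
out of range. -/
noncomputable def sgenA {n m : ℕ} (i : ℕ) : HA n m :=
  if h : 1 ≤ i ∧ i ≤ m then
    RingQuot.mkAlgHom (Rng n) (HRelR n m) (FreeAlgebra.ι _ (⟨i - 1, by omega⟩ : Fin m))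
  else 0

/-- The Yang-Baxter element `h_i(c) = 1 + (1-c) s_i` of `HA n m` (1-based `i`). -/
noncomputable def hh {n m : ℕ} (i : ℕ) (c : Rng n) : HA n m :=
  1 + algebraMap (Rng n) (HA n m) (1 - c) * sgenA i

/-- `A_p^q(c;k) = h_{k-1+p}(d_p/c) h_{k-2+p}(d_{p-1}/c) ⋯ h_{k-1+q}(d_q/c)`,
where `d : ℕ → Rng n` is the (1-based) list of `b`-variables used and `c` is a
unit; for `p = q - 1` this is `1`. -/
noncomputable def AA {n m : ℕ} (p q : ℕ) (c : (Rng n)ˣ) (k : ℕ)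
    (d : ℕ → Rng n) : HA n m :=
  (((List.range' q (p + 1 - q)).reverse).map fun r =>
    hh (k - 1 + r) (d r * ((c⁻¹ : (Rng n)ˣ) : Rng n))).prod

/-- The `b`-variable `b_r` (1-based) of `Rng n`, as a unit; junk value `1` out
of range. -/
noncomputable def bu (n : ℕ) (r : ℕ) : (Rng n)ˣ :=
  if h : 1 ≤ r ∧ r ≤ n then (isUnit_Xu (Sum.inr (⟨r - 1, by omega⟩ : Fin n))).unit else 1

/-- The `a`-variable `a_r` (1-based) of `Rng n`, as a unit; junk value `1` out
of range. -/
noncomputable def au (n : ℕ) (r : ℕ) : (Rng n)ˣ :=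
  if h : 1 ≤ r ∧ r ≤ n then (isUnit_Xu (Sum.inl (⟨r - 1, by omega⟩ : Fin n))).unit else 1

/-- Fomin-Kirillov's element `𝔊^{(m)}(c;d) = A_{m-1}^1(c_1;1) ⋯ A_1^1(c_{m-1};m-1)`,
for 1-based variable lists `c` (units) and `d`, formed in `HA n (m-1)`. -/
noncomputable def Gfk {n : ℕ} (m : ℕ) (c : ℕ → (Rng n)ˣ) (d : ℕ → Rng n) :
    HA n (m - 1) :=
  ((List.range' 1 (m - 1)).map fun k => AA (m - k) 1 (c k) k d).prod

/-- The list of `b`-variables of `Rng n` (1-based). -/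
noncomputable def bval (n : ℕ) : ℕ → Rng n := fun r => ((bu n r : (Rng n)ˣ) : Rng n)

theorem sgenA_comm {n m : ℕ} (i j : ℕ) (h : i + 2 ≤ j ∨ j + 2 ≤ i) :
    (sgenA i : HA n m) * sgenA j = sgenA j * sgenA i := by
  unfold sgenA
  by_cases hi : 1 ≤ i ∧ i ≤ m
  · by_cases hj : 1 ≤ j ∧ j ≤ m
    · rw [dif_pos hi, dif_pos hj]
      have := RingQuot.mkAlgHom_rel (Rng n)
        (HRelR.comm (n := n) (m := m) ⟨i - 1, by omega⟩ ⟨j - 1, by omega⟩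
          (by simp only []; omega))
      simpa [map_mul] using this
    · rw [dif_neg hj]; simp
  · rw [dif_neg hi]; simp

theorem sgenA_braid {n m : ℕ} (i : ℕ) :
    (sgenA i : HA n m) * sgenA (i + 1) * sgenA i =
      sgenA (i + 1) * sgenA i * sgenA (i + 1) := by
  unfold sgenA
  by_cases hi : 1 ≤ i ∧ i ≤ m
  · by_cases hj : 1 ≤ i + 1 ∧ i + 1 ≤ m
    · rw [dif_pos hi, dif_pos hj]
      have := RingQuot.mkAlgHom_rel (Rng n)
        (HRelR.braid (n := n) (m := m) ⟨i - 1, by omega⟩ ⟨i + 1 - 1, by omega⟩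
          (by simp only []; omega))
      simpa [map_mul] using this
    · rw [dif_neg hj]
      rw [dif_pos hi]
      simp [mul_assoc]
  · rw [dif_neg hi]
    by_cases hj : 1 ≤ i + 1 ∧ i + 1 ≤ m
    · rw [dif_pos hj]; simp [mul_assoc]
    · rw [dif_neg hj]; try simp

theorem sgenA_sq {n m : ℕ} (i : ℕ) :
    (sgenA i : HA n m) * sgenA i = -(sgenA i : HA n m) := by
  unfold sgenA
  by_cases hi : 1 ≤ i ∧ i ≤ m
  · rw [dif_pos hi]
    have := RingQuot.mkAlgHom_rel (Rng n) (HRelR.sq (n := n) (m := m) ⟨i - 1, by omega⟩)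
    simpa [map_mul, map_neg] using this
  · rw [dif_neg hi]; simp

/-- The operator `1 ×` on degenerate Hecke algebras over `R n`, mapping
`s_i ↦ s_{i+1}` for all `i`. -/
noncomputable def shiftHom (n m m' : ℕ) : HA n m →ₐ[Rng n] HA n m' :=
  RingQuot.liftAlgHom (Rng n)
    ⟨FreeAlgebra.lift (Rng n) (fun i : Fin m => (sgenA (i.val + 2) : HA n m')),
     by
      intro x y h
      induction h with
      | comm i j h =>
          simp only [map_mul, FreeAlgebra.lift_ι_apply]
          exact sgenA_comm _ _ (by omega)
      | braid i j h =>
          simp only [map_mul, FreeAlgebra.lift_ι_apply, h]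
          exact sgenA_braid _
      | sq i =>
          simp only [map_mul, map_neg, FreeAlgebra.lift_ι_apply]
          exact sgenA_sq _⟩

section Abstract
variable {R : Type*} {A : Type*} [CommRing R] [Ring A] [Algebra R A]

theorem fk_mul_same_abstract (s : A) (hs : s * s = -s) (x y : R) :
    (1 + (1-x) • s) * (1 + (1-y) • s) = 1 + (1-(x*y)) • s := by
  simp only [mul_add, add_mul, mul_one, one_mul, smul_mul_assoc, mul_smul_comm,
    smul_smul, smul_add, smul_neg, mul_assoc]
  rw [hs]
  simp only [smul_neg]
  module

theorem fk_comm_abstract (s t : A) (hc : s * t = t * s) (x y : R) :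
    (1 + (1-x) • s) * (1 + (1-y) • t) = (1 + (1-y) • t) * (1 + (1-x) • s) := by
  simp only [mul_add, add_mul, mul_one, one_mul, smul_mul_assoc, mul_smul_comm,
    smul_smul, smul_add, smul_neg, mul_assoc]
  rw [hc]
  module

theorem fk_yb_abstract (s t : A) (hs : s*s = -s) (ht : t*t = -t)
    (hb : s*(t*s) = t*(s*t)) (x y : R) :
    (1 + (1-x) • s) * (1 + (1-(x*y)) • t) * (1 + (1-y) • s)
      = (1 + (1-y) • t) * (1 + (1-(x*y)) • s) * (1 + (1-x) • t) := by
  simp only [mul_add, add_mul, mul_one, one_mul, smul_mul_assoc, mul_smul_comm,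
    smul_smul, smul_add, smul_neg, mul_assoc]
  rw [hs, ht, hb]
  simp only [mul_neg, neg_mul, smul_neg, smul_add, smul_smul, mul_smul_comm,
    smul_mul_assoc, mul_assoc]
  module

end Abstract

section Level0
variable {n m : ℕ}

theorem hh_smul (i : ℕ) (c : Rng n) :
    (hh i c : HA n m) = 1 + (1-c) • sgenA i := by
  rw [hh]; exact congrArg (1 + ·) (Algebra.smul_def (1-c) (sgenA i)).symm

theorem hh_one (i : ℕ) : (hh i 1 : HA n m) = 1 := by
  simp [hh]

theorem hh_mul_same (i : ℕ) (x y : Rng n) :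
    (hh i x : HA n m) * hh i y = hh i (x * y) := by
  simp only [hh_smul]
  exact fk_mul_same_abstract _ (sgenA_sq i) x y

theorem hh_comm (i j : ℕ) (h : i + 2 ≤ j ∨ j + 2 ≤ i) (x y : Rng n) :
    (hh i x : HA n m) * hh j y = hh j y * hh i x := by
  simp only [hh_smul]
  exact fk_comm_abstract _ _ (sgenA_comm i j h) x y

theorem hh_yb (i : ℕ) (x y : Rng n) :
    (hh i x : HA n m) * hh (i+1) (x*y) * hh i y
      = hh (i+1) y * hh i (x*y) * hh (i+1) x := by
  simp only [hh_smul]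
  refine fk_yb_abstract _ _ (sgenA_sq i) (sgenA_sq (i+1)) ?_ x y
  have := sgenA_braid (n := n) (m := m) i
  rw [mul_assoc, mul_assoc] at this
  exact this

end Level0
section Chains
variable {n m : ℕ}

/-- Descending product `hh t (f t) * hh (t-1) (f (t-1)) * ⋯ * hh q (f q)`. -/
noncomputable def chain (f : ℕ → Rng n) (q t : ℕ) : HA n m :=
  (((List.range' q (t + 1 - q)).reverse).map fun j => hh j (f j)).prod

theorem chain_empty (f : ℕ → Rng n) (q t : ℕ) (h : t < q) :
    (chain f q t : HA n m) = 1 := by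
  unfold chain
  rw [show t + 1 - q = 0 by omega]
  simp

theorem chain_peel_top (f : ℕ → Rng n) (q t : ℕ) (h : q ≤ t + 1) :
    (chain f q (t+1) : HA n m) = hh (t+1) (f (t+1)) * chain f q t := by
  unfold chain
  rw [show t + 1 + 1 - q = (t + 1 - q) + 1 by omega, List.range'_1_concat,
    List.reverse_append, List.map_append, List.prod_append,
    show q + (t + 1 - q) = t + 1 by omega]
  simp

theorem chain_peel_bot (f : ℕ → Rng n) (q t : ℕ) (h : q ≤ t) :
    (chain f q t : HA n m) = chain f (q+1) t * hh q (f q) := by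
  unfold chain
  rw [show t + 1 - q = (t + 1 - (q+1)) + 1 by omega, List.range'_succ,
    List.reverse_cons, List.map_append, List.prod_append]
  simp

theorem chain_split (f : ℕ → Rng n) (q r t : ℕ) (hq : q ≤ r + 1) (hr : r ≤ t) :
    (chain f q t : HA n m) = chain f (r+1) t * chain f q r := by
  unfold chain
  have h2 := List.range'_append (s := q) (m := r + 1 - q) (n := t - r) (step := 1)
  rw [show q + 1 * (r + 1 - q) = r + 1 by omega,
    show (r + 1 - q) + (t - r) = t + 1 - q by omega] at h2
  rw [← h2, show t + 1 - (r + 1) = t - r by omega,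
    List.reverse_append, List.map_append, List.prod_append]

theorem chain_congr (f g : ℕ → Rng n) (q t : ℕ)
    (h : ∀ j, q ≤ j → j ≤ t → f j = g j) :
    (chain f q t : HA n m) = chain g q t := by
  unfold chain
  congr 1
  apply List.map_congr_left
  intro j hj
  rw [List.mem_reverse, List.mem_range'_1] at hj
  rw [h j hj.1 (by omega)]

theorem list_comm_hh (f : ℕ → Rng n) (i : ℕ) (x : Rng n) (l : List ℕ)
    (h : ∀ j ∈ l, (i + 2 ≤ j ∨ j + 2 ≤ i)) :
    (hh i x : HA n m) * (l.map fun j => hh j (f j)).prod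
      = (l.map fun j => hh j (f j)).prod * hh i x := by
  induction l with
  | nil => simp
  | cons a l ih =>
      simp only [List.map_cons, List.prod_cons, ← mul_assoc]
      rw [hh_comm i a (h a (by simp)) x (f a), mul_assoc, mul_assoc,
        ih (fun j hj => h j (by simp [hj]))]

theorem chain_comm_hh (f : ℕ → Rng n) (q t i : ℕ) (x : Rng n)
    (h : ∀ j, q ≤ j → j ≤ t → (i + 2 ≤ j ∨ j + 2 ≤ i)) :
    (hh i x : HA n m) * chain f q t = chain f q t * hh i x := by
  unfold chain
  apply list_comm_hh
  intro j hj
  rw [List.mem_reverse, List.mem_range'_1] at hj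
  exact h j hj.1 (by omega)

end Chains
section GCL
variable {n m : ℕ}

theorem chain_peel_top' (f : ℕ → Rng n) (q t : ℕ) (hq : q ≤ t) (h1 : 1 ≤ t) :
    (chain f q t : HA n m) = hh t (f t) * chain f q (t-1) := by
  obtain ⟨s, rfl⟩ : ∃ s, t = s + 1 := ⟨t - 1, by omega⟩
  rw [chain_peel_top f q s (by omega)]
  simp

/-- The sequence `w` with entries `k` and `k+1` interchanged. -/
noncomputable def uswap (w : ℕ → (Rng n)ˣ) (k : ℕ) : ℕ → (Rng n)ˣ :=
  fun j => if j = k then w (k+1) else if j = k+1 then w k else w j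

theorem gcl_step (w : ℕ → (Rng n)ˣ) (a : (Rng n)ˣ) (q mm t : ℕ)
    (hq : 1 ≤ q) (hqm : q ≤ mm) (hmt : mm < t) :
    (hh mm ↑(w (mm+1) * (w mm)⁻¹) : HA n m) * chain (fun j => ↑(w j * a⁻¹)) q t
      = chain (fun j => ↑(uswap w mm j * a⁻¹)) q t
          * hh (mm+1) ↑(w (mm+1) * (w mm)⁻¹) := by
  set x : Rng n := ↑(w (mm+1) * (w mm)⁻¹) with hx
  set y : Rng n := ↑(w mm * a⁻¹) with hy
  have hxy : x * y = ↑(w (mm+1) * a⁻¹) := by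
    rw [hx, hy, ← Units.val_mul]
    congr 1
    rw [mul_assoc, inv_mul_cancel_left]
  set g : ℕ → Rng n := fun j => ↑(w j * a⁻¹) with hg
  set g' : ℕ → Rng n := fun j => ↑(uswap w mm j * a⁻¹) with hg'
  have hdec : (chain g q t : HA n m)
      = chain g (mm+2) t * (hh (mm+1) (g (mm+1)) * (hh mm (g mm) * chain g q (mm-1))) := by
    rw [chain_split g q (mm+1) t (by omega) (by omega),
      chain_peel_top g q mm (by omega),
      chain_peel_top' g q mm (by omega) (by omega)]
  have hu1 : uswap w mm (mm+1) = w mm := by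
    unfold uswap
    rw [if_neg (by omega), if_pos rfl]
  have hu2 : uswap w mm mm = w (mm+1) := by
    unfold uswap
    rw [if_pos rfl]
  have hu3 : ∀ j, j ≠ mm → j ≠ mm+1 → uswap w mm j = w j := by
    intro j h1 h2
    unfold uswap
    rw [if_neg h1, if_neg h2]
  have hdec' : (chain g' q t : HA n m)
      = chain g (mm+2) t * (hh (mm+1) y * (hh mm (x*y) * chain g q (mm-1))) := by
    rw [chain_split g' q (mm+1) t (by omega) (by omega),
      chain_peel_top g' q mm (by omega),
      chain_peel_top' g' q mm (by omega) (by omega)]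
    have e1 : (chain g' (mm+1+1) t : HA n m) = chain g (mm+2) t :=
      chain_congr _ _ _ _ (fun j hj1 hj2 => by
        simp only [hg', hg, hu3 j (by omega) (by omega)])
    have e2 : g' (mm+1) = y := by
      simp only [hg', hu1, hy]
    have e3 : g' mm = x*y := by
      simp only [hg', hu2]
      exact hxy.symm
    have e4 : (chain g' q (mm-1) : HA n m) = chain g q (mm-1) :=
      chain_congr _ _ _ _ (fun j hj1 hj2 => by
        simp only [hg', hg, hu3 j (by omega) (by omega)])
    rw [e1, e2, e3, e4]
  have hcomm1 : (hh mm x : HA n m) * chain g (mm+2) t = chain g (mm+2) t * hh mm x :=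
    chain_comm_hh g (mm+2) t mm x (fun j h1 h2 => Or.inl (by omega))
  have hcomm2 : (hh (mm+1) x : HA n m) * chain g q (mm-1) = chain g q (mm-1) * hh (mm+1) x :=
    chain_comm_hh g q (mm-1) (mm+1) x (fun j h1 h2 => Or.inr (by omega))
  have hg1 : g (mm+1) = x * y := by rw [hg]; exact hxy.symm
  have hgm : g mm = y := by rw [hg, hy]
  have hyb := hh_yb (n := n) (m := m) mm x y
  calc (hh mm x : HA n m) * chain g q t
      = hh mm x * chain g (mm+2) t
          * (hh (mm+1) (g (mm+1)) * (hh mm (g mm) * chain g q (mm-1))) := by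
        rw [hdec, mul_assoc]
    _ = chain g (mm+2) t
          * (hh mm x * hh (mm+1) (x*y) * hh mm y * chain g q (mm-1)) := by
        rw [hcomm1, hg1, hgm, mul_assoc]
        congr 1
        noncomm_ring
    _ = chain g (mm+2) t
          * (hh (mm+1) y * (hh mm (x*y) * (chain g q (mm-1) * hh (mm+1) x))) := by
        rw [hyb, ← hcomm2]
        congr 1
        noncomm_ring
    _ = chain g' q t * hh (mm+1) x := by
        rw [hdec']
        noncomm_ring

end GCL
section GCL2
variable {n m : ℕ}

theorem chain_single (f : ℕ → Rng n) (q : ℕ) :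
    (chain f q q : HA n m) = hh q (f q) := by
  unfold chain
  rw [show q + 1 - q = 1 by omega]
  simp [List.range']

theorem gcl_base (a : (Rng n)ˣ) (q t : ℕ) (hq : 1 ≤ q) (mm : ℕ)
    (w : ℕ → (Rng n)ˣ) (hqm : q ≤ mm) (htm : t ≤ mm) :
    (chain (fun j => ↑(w (j+1) * (w mm)⁻¹)) mm t : HA n m) *
      chain (fun j => ↑(w j * a⁻¹)) q t
    = chain (fun j => ↑((if j < mm then w j else w (j+1)) * a⁻¹)) q t *
      chain (fun j => ↑(w j * (w mm)⁻¹)) (mm+1) t := by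
  rcases Nat.lt_or_ge t mm with h | h
  · rw [chain_empty _ mm t h, chain_empty _ (mm+1) t (by omega), one_mul, mul_one]
    apply chain_congr
    intro j hj1 hj2
    rw [if_pos (by omega)]
  · have htm' : t = mm := by omega
    subst htm'
    rw [chain_empty _ (t+1) t (by omega), mul_one, chain_single,
      chain_peel_top' (n := n) (m := m) (fun j => (↑(w j * a⁻¹) : Rng n)) q t hqm (by omega),
      chain_peel_top' (n := n) (m := m)
        (fun j => (↑((if j < t then w j else w (j+1)) * a⁻¹) : Rng n)) q t hqm (by omega),
      ← mul_assoc, hh_mul_same]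
    have e1 : (↑(w (t+1) * (w t)⁻¹) : Rng n) * ↑(w t * a⁻¹) = ↑(w (t+1) * a⁻¹) := by
      rw [← Units.val_mul]
      congr 1
      rw [mul_assoc, inv_mul_cancel_left]
    rw [e1, if_neg (by omega)]
    congr 1
    apply chain_congr
    intro j hj1 hj2
    rw [if_pos (by omega)]

theorem gcl (a : (Rng n)ˣ) (q t : ℕ) (hq : 1 ≤ q) :
    ∀ (d mm : ℕ) (w : ℕ → (Rng n)ˣ), q ≤ mm → t ≤ mm + d →
    (chain (fun j => ↑(w (j+1) * (w mm)⁻¹)) mm t : HA n m) *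
      chain (fun j => ↑(w j * a⁻¹)) q t
    = chain (fun j => ↑((if j < mm then w j else w (j+1)) * a⁻¹)) q t *
      chain (fun j => ↑(w j * (w mm)⁻¹)) (mm+1) t := by
  intro d
  induction d with
  | zero =>
      intro mm w hqm htd
      exact gcl_base a q t hq mm w hqm (by omega)
  | succ d ih =>
      intro mm w hqm htd
      rcases Nat.lt_or_ge mm t with hmt | hmt
      · -- inductive step
        have hu1 : uswap w mm (mm+1) = w mm := by
          unfold uswap
          rw [if_neg (by omega), if_pos rfl]
        have hu2 : uswap w mm mm = w (mm+1) := by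
          unfold uswap
          rw [if_pos rfl]
        have hu3 : ∀ j, j ≠ mm → j ≠ mm+1 → uswap w mm j = w j := by
          intro j h1 h2
          unfold uswap
          rw [if_neg h1, if_neg h2]
        set v := uswap w mm with hv
        have key := ih (mm+1) v (by omega) (by omega)
        have c1 : (chain (fun j => ↑(w (j+1) * (w mm)⁻¹)) (mm+1) t : HA n m)
            = chain (fun j => ↑(v (j+1) * (v (mm+1))⁻¹)) (mm+1) t := by
          apply chain_congr
          intro j hj1 hj2
          rw [hu1, hu3 (j+1) (by omega) (by omega)]
        have c2 : (chain (fun j => ↑((if j < mm+1 then v j else v (j+1)) * a⁻¹)) q t : HA n m)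
            = chain (fun j => ↑((if j < mm then w j else w (j+1)) * a⁻¹)) q t := by
          apply chain_congr
          intro j hj1 hj2
          rcases Nat.lt_or_ge j mm with h | h
          · rw [if_pos (by omega), if_pos (by omega), hu3 j (by omega) (by omega)]
          · rcases Nat.lt_or_ge j (mm+1) with h' | h'
            · have : j = mm := by omega
              subst this
              rw [if_pos (by omega), if_neg (by omega), hu2]
            · rw [if_neg (by omega), if_neg (by omega), hu3 (j+1) (by omega) (by omega)]
        have c3 : (chain (fun j => ↑(v j * (v (mm+1))⁻¹)) (mm+2) t : HA n m)
            = chain (fun j => ↑(w j * (w mm)⁻¹)) (mm+2) t := by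
          apply chain_congr
          intro j hj1 hj2
          rw [hu1, hu3 j (by omega) (by omega)]
        calc (chain (fun j => ↑(w (j+1) * (w mm)⁻¹)) mm t : HA n m) *
              chain (fun j => ↑(w j * a⁻¹)) q t
            = chain (fun j => ↑(w (j+1) * (w mm)⁻¹)) (mm+1) t *
                (hh mm ↑(w (mm+1) * (w mm)⁻¹) * chain (fun j => ↑(w j * a⁻¹)) q t) := by
              rw [chain_peel_bot _ mm t (by omega), mul_assoc]
          _ = chain (fun j => ↑(v (j+1) * (v (mm+1))⁻¹)) (mm+1) t *
                chain (fun j => ↑(v j * a⁻¹)) q t * hh (mm+1) ↑(w (mm+1) * (w mm)⁻¹) := by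
              rw [gcl_step w a q mm t hq hqm hmt, c1, mul_assoc]
          _ = chain (fun j => ↑((if j < mm+1 then v j else v (j+1)) * a⁻¹)) q t *
                (chain (fun j => ↑(v j * (v (mm+1))⁻¹)) (mm+2) t *
                  hh (mm+1) ↑(w (mm+1) * (w mm)⁻¹)) := by
              rw [key, mul_assoc]
          _ = chain (fun j => ↑((if j < mm then w j else w (j+1)) * a⁻¹)) q t *
              chain (fun j => ↑(w j * (w mm)⁻¹)) (mm+1) t := by
              rw [c2, c3, ← chain_peel_bot _ (mm+1) t (by omega)]
      · exact gcl_base a q t hq mm w hqm hmt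

end GCL2
section Outer
variable {n m : ℕ}

theorem AA_eq_chain (p q k : ℕ) (c : (Rng n)ˣ) (d : ℕ → Rng n)
    (hk : 1 ≤ k) (hq : 1 ≤ q) :
    (AA p q c k d : HA n m)
      = chain (fun j => d (j - k + 1) * ((c⁻¹ : (Rng n)ˣ) : Rng n)) (k+q-1) (k+p-1) := by
  unfold AA chain
  rw [show (k+p-1) + 1 - (k+q-1) = p + 1 - q by omega,
    show k+q-1 = (k-1) + q by omega,
    ← List.map_add_range' (a := k-1) q (p+1-q) 1]
  simp only [List.map_reverse, List.map_map]
  congr 2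
  apply List.map_congr_left
  intro r hr
  rw [List.mem_range'_1] at hr
  simp only [Function.comp_apply]
  rw [show k - 1 + r - k + 1 = r by omega, show k - 1 + r = k + r - 1 by omega]

/-- The list of `b`-variables with `b_p` omitted. -/
noncomputable def bvalP (n p : ℕ) : ℕ → Rng n :=
  fun j => if j < p then bval n j else bval n (j+1)

theorem outer (p : ℕ) (hp : 1 ≤ p) (hpn : p ≤ n) : ∀ (ℓ k : ℕ), 2 ≤ k → k + ℓ ≤ n →
    (chain (fun j => bval n (j - k + 2) * (((bu n p)⁻¹ : (Rng n)ˣ) : Rng n)) (p+k-1) (n-1) : HA n m) *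
      ((List.range' k ℓ).map (fun i => (AA (n-i) 1 (au n i) i (bval n) : HA n m))).prod
    = ((List.range' k ℓ).map (fun i => (AA (n-i) 1 (au n i) i (bvalP n p) : HA n m))).prod *
      chain (fun j => bval n (j - (k+ℓ) + 2) * (((bu n p)⁻¹ : (Rng n)ˣ) : Rng n)) (p+(k+ℓ)-1) (n-1) := by
  intro ℓ
  induction ℓ with
  | zero =>
      intro k hk hkn
      simp
  | succ ℓ ih =>
      intro k hk hkn
      set w : ℕ → (Rng n)ˣ := fun j => bu n (j - k + 1) with hw
      have key := gcl (n := n) (m := m) (au n k) k (n-1) (by omega) (n-1) (p+k-1) w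
        (by omega) (by omega)
      have c1 : (chain (fun j => ↑(w (j+1) * (w (p+k-1))⁻¹)) (p+k-1) (n-1) : HA n m)
          = chain (fun j => bval n (j - k + 2) * (((bu n p)⁻¹ : (Rng n)ˣ) : Rng n)) (p+k-1) (n-1) := by
        apply chain_congr
        intro j hj1 hj2
        rw [Units.val_mul]
        simp only [hw]
        rw [show j + 1 - k + 1 = j - k + 2 by omega, show p + k - 1 - k + 1 = p by omega]
        rfl
      have c2 : (chain (fun j => ↑(w j * (au n k)⁻¹)) k (n-1) : HA n m)
          = AA (n-k) 1 (au n k) k (bval n) := by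
        rw [AA_eq_chain (n-k) 1 k (au n k) (bval n) (by omega) (by omega),
          show k + 1 - 1 = k by omega, show k + (n-k) - 1 = n-1 by omega]
        apply chain_congr
        intro j hj1 hj2
        rw [Units.val_mul]
        simp only [hw]
        rfl
      have c3 : (chain (fun j => ↑((if j < p+k-1 then w j else w (j+1)) * (au n k)⁻¹)) k (n-1) : HA n m)
          = AA (n-k) 1 (au n k) k (bvalP n p) := by
        rw [AA_eq_chain (n-k) 1 k (au n k) (bvalP n p) (by omega) (by omega),
          show k + 1 - 1 = k by omega, show k + (n-k) - 1 = n-1 by omega]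
        apply chain_congr
        intro j hj1 hj2
        rw [Units.val_mul]
        simp only [hw]
        unfold bvalP
        rcases Nat.lt_or_ge j (p+k-1) with h | h
        · rw [if_pos h, if_pos (by omega)]
          rfl
        · rw [if_neg (by omega), if_neg (by omega),
            show j + 1 - k + 1 = j - k + 1 + 1 by omega]
          rfl
      have c4 : (chain (fun j => ↑(w j * (w (p+k-1))⁻¹)) (p+k-1+1) (n-1) : HA n m)
          = chain (fun j => bval n (j - (k+1) + 2) * (((bu n p)⁻¹ : (Rng n)ˣ) : Rng n)) (p+(k+1)-1) (n-1) := by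
        rw [show p+k-1+1 = p+(k+1)-1 by omega]
        apply chain_congr
        intro j hj1 hj2
        rw [Units.val_mul]
        simp only [hw]
        rw [show j - k + 1 = j - (k+1) + 2 by omega, show p + k - 1 - k + 1 = p by omega]
        rfl
      rw [c1, c2, c3, c4] at key
      rw [List.range'_succ, List.map_cons, List.prod_cons, List.map_cons, List.prod_cons,
        ← mul_assoc, key, mul_assoc]
      rw [ih (k+1) (by omega) (by omega)]
      rw [← mul_assoc]
      congr 2 <;> rw [show k + (ℓ + 1) = (k+1) + ℓ by omega]

end Outer
section Shift
variable {n m : ℕ}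

theorem chain_comm_chain (f g : ℕ → Rng n) (q t q' t' : ℕ)
    (h : ∀ i j, q ≤ i → i ≤ t → q' ≤ j → j ≤ t' → (i + 2 ≤ j ∨ j + 2 ≤ i)) :
    (chain f q t : HA n m) * chain g q' t' = chain g q' t' * chain f q t := by
  have main : ∀ l : List ℕ, (∀ i ∈ l, q ≤ i ∧ i ≤ t) →
      ((l.map fun j => (hh j (f j) : HA n m)).prod) * chain g q' t'
        = chain g q' t' * (l.map fun j => (hh j (f j) : HA n m)).prod := by
    intro l
    induction l with
    | nil => simp
    | cons a l ih =>
        intro hl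
        simp only [List.map_cons, List.prod_cons, mul_assoc]
        rw [ih (fun i hi => hl i (by simp [hi])), ← mul_assoc, ← mul_assoc]
        congr 1
        exact (chain_comm_hh g q' t' a (f a) (fun j hj1 hj2 => by
          have h5 := hl a (by simp)
          have := h a j h5.1 h5.2 hj1 hj2
          omega))
  unfold chain
  apply main
  intro i hi
  rw [List.mem_reverse, List.mem_range'_1] at hi
  exact ⟨hi.1, by omega⟩

theorem shiftHom_sgenA (i : ℕ) (hi : 1 ≤ i) :
    shiftHom n m (m+1) (sgenA i) = sgenA (i+1) := by
  by_cases h : i ≤ m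
  · have e1 : (sgenA i : HA n m)
        = RingQuot.mkAlgHom (Rng n) (HRelR n m)
            (FreeAlgebra.ι _ (⟨i - 1, by omega⟩ : Fin m)) := by
      unfold sgenA
      rw [dif_pos ⟨hi, h⟩]
    rw [e1]
    unfold shiftHom
    rw [RingQuot.liftAlgHom_mkAlgHom_apply, FreeAlgebra.lift_ι_apply]
    show (sgenA (i-1+2) : HA n (m+1)) = sgenA (i+1)
    rw [show i-1+2 = i+1 by omega]
  · have e1 : (sgenA i : HA n m) = 0 := by
      unfold sgenA
      exact dif_neg (fun hc => h hc.2)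
    have e2 : (sgenA (i+1) : HA n (m+1)) = 0 := by
      unfold sgenA
      exact dif_neg (fun hc => h (Nat.le_of_succ_le_succ hc.2))
    rw [e1, map_zero, e2]

theorem shiftHom_hh (i : ℕ) (hi : 1 ≤ i) (c : Rng n) :
    shiftHom n m (m+1) (hh i c) = hh (i+1) c := by
  unfold hh
  rw [map_add, map_one, map_mul, AlgHom.commutes, shiftHom_sgenA i hi]

theorem shiftHom_AA (p q k : ℕ) (hq : 1 ≤ q) (hk : 1 ≤ k) (c : (Rng n)ˣ) (d : ℕ → Rng n) :
    shiftHom n m (m+1) (AA p q c k d) = AA p q c (k+1) d := by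
  unfold AA
  rw [map_list_prod, List.map_map]
  congr 1
  apply List.map_congr_left
  intro r hr
  rw [List.mem_reverse, List.mem_range'_1] at hr
  simp only [Function.comp_apply]
  rw [shiftHom_hh (k-1+r) (by omega)]
  congr 1
  omega

end Shift

theorem main_aux (q p : ℕ) (hp1 : 1 ≤ p) (hpn : p ≤ q+2) :
    (Gfk (q+2) (fun k => if k = 1 then bu (q+2) p else au (q+2) k) (bval (q+2))
        : HA (q+2) (q+1))
      = AA (p-1) 1 (bu (q+2) p) 1 (bval (q+2)) *
        (shiftHom (q+2) q (q+1))
          (Gfk (n := q+2) (q+1) (fun k => au (q+2) (k+1)) (bvalP (q+2) p)) := by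
  set f : ℕ → Rng (q+2) :=
    fun j => bval (q+2) (j - 1 + 1) * (((bu (q+2) p)⁻¹ : (Rng (q+2))ˣ) : Rng (q+2)) with hf
  have hml : List.range' 2 q = List.map (fun x => 1+x) (List.range' 1 q) := by
    have h0 := List.map_add_range' (a := 1) 1 q 1
    rw [h0]
  -- the shifted factor
  have hshift : (shiftHom (q+2) q (q+1))
        (Gfk (n := q+2) (q+1) (fun k => au (q+2) (k+1)) (bvalP (q+2) p))
      = ((List.range' 2 q).map
          (fun i => (AA (q+2-i) 1 (au (q+2) i) i (bvalP (q+2) p) : HA (q+2) (q+1)))).prod := by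
    unfold Gfk
    rw [show List.range' 1 (q+1-1) = List.range' 1 q from rfl,
      map_list_prod, List.map_map, hml, List.map_map]
    congr 1
    apply List.map_congr_left
    intro k hk
    rw [List.mem_range'_1] at hk
    show shiftHom (q+2) q (q+1) (AA (q+1-k) 1 (au (q+2) (k+1)) k (bvalP (q+2) p))
        = AA (q+2-(1+k)) 1 (au (q+2) (1+k)) (1+k) (bvalP (q+2) p)
    rw [shiftHom_AA _ _ _ le_rfl (by omega)]
    rw [show q+2-(1+k) = q+1-k by omega, show 1+k = k+1 by omega]
  -- the first factor of the Fomin-Kirillov element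
  have hLHS : (Gfk (q+2) (fun k => if k = 1 then bu (q+2) p else au (q+2) k) (bval (q+2))
        : HA (q+2) (q+1))
      = AA (q+1) 1 (bu (q+2) p) 1 (bval (q+2)) *
        ((List.range' 2 q).map
          (fun i => (AA (q+2-i) 1 (au (q+2) i) i (bval (q+2)) : HA (q+2) (q+1)))).prod := by
    unfold Gfk
    rw [show List.range' 1 (q+2-1) = 1 :: List.range' 2 q from rfl,
      List.map_cons, List.prod_cons]
    congr 1
    apply congrArg List.prod
    apply List.map_congr_left
    intro k hk
    rw [List.mem_range'_1] at hk
    show AA (q+2-k) 1 (if k = 1 then bu (q+2) p else au (q+2) k) k (bval (q+2))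
        = AA (q+2-k) 1 (au (q+2) k) k (bval (q+2))
    rw [if_neg (by omega)]
  have hAA1 : (AA (q+1) 1 (bu (q+2) p) 1 (bval (q+2)) : HA (q+2) (q+1))
      = chain f 1 (q+1) := by
    rw [AA_eq_chain (q+1) 1 1 (bu (q+2) p) (bval (q+2)) le_rfl le_rfl,
      show 1+1-1 = 1 from rfl, show 1+(q+1)-1 = q+1 by omega, hf]
  have hAA2 : (chain f 1 (p-1) : HA (q+2) (q+1))
      = AA (p-1) 1 (bu (q+2) p) 1 (bval (q+2)) := by
    rw [AA_eq_chain (p-1) 1 1 (bu (q+2) p) (bval (q+2)) le_rfl le_rfl,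
      show 1+1-1 = 1 from rfl, show 1+(p-1)-1 = p-1 by omega, hf]
  have hsplit : (chain f 1 (q+1) : HA (q+2) (q+1))
      = chain f p (q+1) * chain f 1 (p-1) := by
    have h0 := chain_split (n := q+2) (m := q+1) f 1 (p-1) (q+1) (by omega) (by omega)
    rw [show p-1+1 = p by omega] at h0
    exact h0
  have htriv : (chain f p (q+1) : HA (q+2) (q+1)) = chain f (p+1) (q+1) := by
    rcases le_or_gt p (q+1) with h | h
    · rw [chain_peel_bot f p (q+1) h]
      have h1 : f p = 1 := by
        rw [hf]
        simp only []
        rw [show p-1+1 = p by omega]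
        unfold bval
        rw [← Units.val_mul, mul_inv_cancel, Units.val_one]
      rw [h1, hh_one, mul_one]
    · rw [chain_empty f p (q+1) h, chain_empty f (p+1) (q+1) (by omega)]
  have hcomm : (chain f (p+1) (q+1) : HA (q+2) (q+1)) * chain f 1 (p-1)
      = chain f 1 (p-1) * chain f (p+1) (q+1) :=
    chain_comm_chain f f (p+1) (q+1) 1 (p-1)
      (fun i j h1 h2 h3 h4 => Or.inr (by omega))
  have O := outer (n := q+2) (m := q+1) p hp1 hpn q 2 (by omega) (by omega)
  rw [show (q:ℕ)+2-1 = q+1 from rfl, show p+2-1 = p+1 by omega] at O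
  have e5 : (chain (fun j => bval (q+2) (j - 2 + 2) *
        (((bu (q+2) p)⁻¹ : (Rng (q+2))ˣ) : Rng (q+2))) (p+1) (q+1) : HA (q+2) (q+1))
      = chain f (p+1) (q+1) := by
    apply chain_congr
    intro j hj1 hj2
    rw [hf]
    simp only []
    rw [show j-2+2 = j-1+1 by omega]
  have e6 : (chain (fun j => bval (q+2) (j - (2+q) + 2) *
        (((bu (q+2) p)⁻¹ : (Rng (q+2))ˣ) : Rng (q+2))) (p+(2+q)-1) (q+1) : HA (q+2) (q+1))
      = 1 :=
    chain_empty _ _ _ (by omega)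
  rw [e5, e6, mul_one] at O
  rw [hshift, hLHS, hAA1, hsplit, htriv, hcomm, mul_assoc, O, ← hAA2]

theorem fk_element_factorization_aux (n p : ℕ) (hp1 : 1 ≤ p) (hpn : p ≤ n) :
    (Gfk n (fun k => if k = 1 then bu n p else au n k) (bval n) : HA n (n - 1)) =
      AA (p - 1) 1 (bu n p) 1 (bval n) *
        shiftHom n (n - 1 - 1) (n - 1)
          (Gfk (n - 1) (fun k => au n (k + 1))
            (fun j => if j < p then bval n j else bval n (j + 1))) := by
  rcases Nat.lt_or_ge n 2 with h2 | h2
  · have hn : n = 1 := by omega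
    have hp : p = 1 := by omega
    subst hn; subst hp
    rw [show (Gfk 1 (fun k => if k = 1 then bu 1 1 else au 1 k) (bval 1) : HA 1 0) = 1 by
        unfold Gfk; simp,
      show (Gfk (n := 1) (1-1) (fun k => au 1 (k+1))
          (fun j => if j < 1 then bval 1 j else bval 1 (j+1)) : HA 1 (1-1-1)) = 1 by
        unfold Gfk; simp,
      show (AA (1-1) 1 (bu 1 1) 1 (bval 1) : HA 1 (1-1)) = 1 by
        unfold AA; simp,
      map_one, one_mul]
  · obtain ⟨q, rfl⟩ : ∃ q, n = q + 2 := ⟨n - 2, by omega⟩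
    exact main_aux q p hp1 hpn

/-- **The factorization of the specialized Fomin-Kirillov element**
(Buch-Rimányi): `𝔊^{(n)}(b_p, a_2, …, a_n ; b_1, …, b_n)` factors as
`A_{p-1}^1(b_p;1) · (1 × 𝔊^{(n-1)}(a_2,…,a_n ; b_1,…,b_{p-1},b_{p+1},…,b_n))`. -/
theorem fk_element_factorization (n p : ℕ) (hp1 : 1 ≤ p) (hpn : p ≤ n) :
    (Gfk n (fun k => if k = 1 then bu n p else au n k) (bval n) : HA n (n - 1)) =
      AA (p - 1) 1 (bu n p) 1 (bval n) *
        shiftHom n (n - 1 - 1) (n - 1)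
          (Gfk (n - 1) (fun k => au n (k + 1))
            (fun j => if j < p then bval n j else bval n (j + 1))) := by
  exact fk_element_factorization_aux n p hp1 hpn
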